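/- There exists a finite state space S and a complete updating rule P which is concentrated and arises from a Hypothesis Testing representation with ε = 0, but which is not a conditional probability system. Concretely, let S = {h,t,e,e',l₁,l₂}, μ_0 uniform on {h,t}, μ_1(e) = 7/8, μ_1(e') = 1/8, μ_2 uniform on {l₁,l₂}, with second-order weights ρ(μ_0) = 1/2, ρ(μ_1) = 1/3, ρ(μ_2) = 1/6, and define P(·|E) = BU(μ_0,E) if μ_0(E) > 0 and otherwise P(·|E) = BU(μ_{k*},E) where k* maximizes μ_k(E)ρ(μ_k). Then for E = {e,e',l₁,l₂} and A = {e',l₁,l₂} ⊆ E, the chain rule fails: P({e'}|E) ≠ P({e'}|A)·P(A|E). -/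
import Mathlib


open Finset

variable {S : Type*} [Fintype S] [DecidableEq S]

def IsProb (μ : S → ℝ) : Prop := (∀ s, 0 ≤ μ s) ∧ ∑ s, μ s = 1

def mass (μ : S → ℝ) (E : Finset S) : ℝ := ∑ s ∈ E, μ s

noncomputable def BU (μ : S → ℝ) (E : Finset S) : S → ℝ :=
  fun s => if s ∈ E then μ s / mass μ E else 0

def OSRep (P : Finset S → S → ℝ) (K : ℕ) (μ : ℕ → S → ℝ) : Prop :=
  (∀ k ≤ K, IsProb (μ k)) ∧
  (∀ s : S, ∃ k ≤ K, 0 < μ k s) ∧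
  (∀ E : Finset S, E.Nonempty → ∀ k ≤ K,
    0 < mass (μ k) E → (∀ j < k, mass (μ j) E = 0) → P E = BU (μ k) E)

def DisjointSupports (K : ℕ) (μ : ℕ → S → ℝ) : Prop :=
  ∀ k ≤ K, ∀ k' ≤ K, k ≠ k' → ∀ s : S, ¬ (0 < μ k s ∧ 0 < μ k' s)

-- auxiliary definitions and lemmas

noncomputable def u0 : Fin 6 → ℝ := fun s => if s = 0 ∨ s = 1 then 1 / 2 else 0
noncomputable def u1 : Fin 6 → ℝ := fun s => if s = 2 then 7 / 8 else if s = 3 then 1 / 8 else 0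
noncomputable def u2 : Fin 6 → ℝ := fun s => if s = 4 ∨ s = 5 then 1 / 2 else 0
noncomputable def μf : ℕ → Fin 6 → ℝ := fun k => if k = 0 then u0 else if k = 1 then u1 else u2
noncomputable def ρf : ℕ → ℝ := fun k => if k = 0 then 1 / 2 else if k = 1 then 1 / 3 else 1 / 6

open Classical in
noncomputable def Pd : Finset (Fin 6) → Fin 6 → ℝ := fun E =>
  if 0 < mass u0 E then BU u0 E
  else if mass u2 E * (1 / 6) < mass u1 E * (1 / 3) then BU u1 E else BU u2 E

lemma u0_nonneg : ∀ s, 0 ≤ u0 s := by intro s; unfold u0; split <;> norm_num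
lemma u1_nonneg : ∀ s, 0 ≤ u1 s := by intro s; unfold u1; split <;> [norm_num; split <;> norm_num]
lemma u2_nonneg : ∀ s, 0 ≤ u2 s := by intro s; unfold u2; split <;> norm_num

lemma mass_nonneg {μ : S → ℝ} (h : ∀ s, 0 ≤ μ s) (E : Finset S) : 0 ≤ mass μ E :=
  Finset.sum_nonneg fun s _ => h s

lemma mass_as_univ (μ : S → ℝ) (E : Finset S) :
    mass μ E = ∑ s : S, if s ∈ E then μ s else 0 := by
  rw [mass, Finset.sum_ite_mem, Finset.univ_inter]

lemma mass_u0 (E : Finset (Fin 6)) :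
    mass u0 E = (if (0 : Fin 6) ∈ E then 1 / 2 else 0) + (if (1 : Fin 6) ∈ E then 1 / 2 else 0) := by
  rw [mass_as_univ, Fin.sum_univ_six]; simp [u0]

lemma mass_u1 (E : Finset (Fin 6)) :
    mass u1 E = (if (2 : Fin 6) ∈ E then 7 / 8 else 0) + (if (3 : Fin 6) ∈ E then 1 / 8 else 0) := by
  rw [mass_as_univ, Fin.sum_univ_six]; simp [u1]

lemma mass_u2 (E : Finset (Fin 6)) :
    mass u2 E = (if (4 : Fin 6) ∈ E then 1 / 2 else 0) + (if (5 : Fin 6) ∈ E then 1 / 2 else 0) := by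
  rw [mass_as_univ, Fin.sum_univ_six]; simp [u2]

lemma BU_isProb {μ : S → ℝ} (h : ∀ s, 0 ≤ μ s) {E : Finset S} (hm : 0 < mass μ E) :
    IsProb (BU μ E) := by
  constructor
  · intro s; unfold BU; split
    · exact div_nonneg (h s) hm.le
    · exact le_refl 0
  · have h2 : ∑ s, BU μ E s = ∑ s ∈ E, μ s / mass μ E := by
      unfold BU
      rw [Finset.sum_ite_mem, Finset.univ_inter]
    rw [h2, ← Finset.sum_div]
    exact div_self hm.ne'

lemma mass_BU {μ : S → ℝ} {E : Finset S} (hm : 0 < mass μ E) : mass (BU μ E) E = 1 := by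
  unfold mass BU
  rw [Finset.sum_congr rfl (fun s hs => if_pos hs), ← Finset.sum_div]
  exact div_self hm.ne'

lemma pos_branch (E : Finset (Fin 6)) (hE : E.Nonempty) (h0 : ¬ 0 < mass u0 E) :
    0 < mass u2 E * (1 / 6) + mass u1 E * (1 / 3) := by
  obtain ⟨s, hs⟩ := hE
  have h0' : mass u0 E = 0 := le_antisymm (not_lt.mp h0) (mass_nonneg u0_nonneg E)
  have hu0 : u0 s = 0 := by
    have h1 : u0 s ≤ mass u0 E := Finset.single_le_sum (fun i _ => u0_nonneg i) hs
    have := u0_nonneg s; linarith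
  have hle1 : u1 s ≤ mass u1 E := Finset.single_le_sum (fun i _ => u1_nonneg i) hs
  have hle2 : u2 s ≤ mass u2 E := Finset.single_le_sum (fun i _ => u2_nonneg i) hs
  have hn1 := mass_nonneg u1_nonneg E
  have hn2 := mass_nonneg u2_nonneg E
  have hpos : 0 < u1 s ∨ 0 < u2 s := by
    fin_cases s <;> simp_all [u0, u1, u2] <;> norm_num
  rcases hpos with h | h <;> nlinarith

lemma P_isProb (E : Finset (Fin 6)) (hE : E.Nonempty) :
    IsProb (Pd E) ∧ mass (Pd E) E = 1 := by
  unfold Pd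
  split_ifs with h1 h2
  · exact ⟨BU_isProb u0_nonneg h1, mass_BU h1⟩
  · have hn2 := mass_nonneg u2_nonneg E
    have hm1 : 0 < mass u1 E := by nlinarith
    exact ⟨BU_isProb u1_nonneg hm1, mass_BU hm1⟩
  · have hp := pos_branch E hE h1
    have hn1 := mass_nonneg u1_nonneg E
    have hn2 := mass_nonneg u2_nonneg E
    have hm2 : 0 < mass u2 E := by
      by_contra h
      have h2' : mass u2 E = 0 := le_antisymm (not_lt.mp h) hn2
      rw [h2'] at hp h2
      push_neg at h2
      nlinarith
    exact ⟨BU_isProb u2_nonneg hm2, mass_BU hm2⟩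

set_option maxHeartbeats 1600000 in
lemma main_rep (E : Finset (Fin 6)) (hE : E.Nonempty) :
    (0 < mass u0 E → Pd E = BU u0 E) ∧
    (mass u0 E = 0 → ∃ k ≤ 2, Pd E = BU (μf k) E ∧
      ∀ j ≤ 2, j ≠ k → mass (μf j) E * ρf j < mass (μf k) E * ρf k) := by
  constructor
  · intro h; unfold Pd; rw [if_pos h]
  · intro h0
    have hP : Pd E = if mass u2 E * (1 / 6) < mass u1 E * (1 / 3) then BU u1 E else BU u2 E := by
      unfold Pd; rw [if_neg (by rw [h0]; exact lt_irrefl 0)]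
    have e0 : (0 : Fin 6) ∉ E := by
      intro h
      have hm := mass_u0 E
      rw [h0, if_pos h] at hm
      split_ifs at hm <;> norm_num at hm
    have e1 : (1 : Fin 6) ∉ E := by
      intro h
      have hm := mass_u0 E
      rw [h0] at hm
      rw [if_pos h] at hm
      split_ifs at hm <;> norm_num at hm
    have h1 := mass_u1 E
    have h2 := mass_u2 E
    by_cases m2 : (2 : Fin 6) ∈ E <;> by_cases m3 : (3 : Fin 6) ∈ E <;>
      by_cases m4 : (4 : Fin 6) ∈ E <;> by_cases m5 : (5 : Fin 6) ∈ E <;>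
      simp only [m2, m3, m4, m5, if_true, if_false, if_pos, if_neg, not_false_iff] at h1 h2 <;>
      norm_num at h1 h2 <;>
    first
    | (refine ⟨1, by norm_num, by rw [hP, if_pos (by rw [h1, h2]; norm_num)]; rfl, ?_⟩
       intro j hj hne; interval_cases j <;>
         simp_all [μf, ρf] <;> norm_num [h0, h1, h2] <;> done)
    | (exfalso; obtain ⟨s, hs⟩ := hE; fin_cases s <;> simp_all; done)
    | (refine ⟨2, by norm_num, by rw [hP, if_neg (by rw [h1, h2]; norm_num)]; rfl, ?_⟩
       intro j hj hne; interval_cases j <;>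
         simp_all [μf, ρf] <;> norm_num [h0, h1, h2] <;> done)

lemma hA_eq : Pd ({2, 3, 4, 5} : Finset (Fin 6)) = BU u1 ({2, 3, 4, 5} : Finset (Fin 6)) := by
  unfold Pd
  rw [if_neg (by simp [mass, u0]), if_pos (by simp [mass, u1, u2]; norm_num)]

lemma hB_eq : Pd ({3, 4, 5} : Finset (Fin 6)) = BU u2 ({3, 4, 5} : Finset (Fin 6)) := by
  unfold Pd
  rw [if_neg (by simp [mass, u0]), if_neg (by simp [mass, u1, u2]; norm_num)]

lemma final_ne :
    mass (Pd ({2, 3, 4, 5} : Finset (Fin 6))) ({3} : Finset (Fin 6)) ≠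
      mass (Pd ({3, 4, 5} : Finset (Fin 6))) ({3} : Finset (Fin 6)) *
        mass (Pd ({2, 3, 4, 5} : Finset (Fin 6))) ({3, 4, 5} : Finset (Fin 6)) := by
  rw [hA_eq, hB_eq]
  have lhs : mass (BU u1 ({2, 3, 4, 5} : Finset (Fin 6))) ({3} : Finset (Fin 6)) = 1 / 8 := by
    simp [mass, BU, u1]; norm_num
  have rhs1 : mass (BU u2 ({3, 4, 5} : Finset (Fin 6))) ({3} : Finset (Fin 6)) = 0 := by
    simp [mass, BU, u2]
  rw [lhs, rhs1]
  norm_num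

theorem ht_not_cps :
    ∃ P : Finset (Fin 6) → Fin 6 → ℝ,
      (∀ E : Finset (Fin 6), E.Nonempty → IsProb (P E)) ∧
      (∀ E : Finset (Fin 6), E.Nonempty → mass (P E) E = 1) ∧
      (let μ0 : Fin 6 → ℝ := fun s => if s = 0 ∨ s = 1 then 1 / 2 else 0
       let μ1 : Fin 6 → ℝ := fun s => if s = 2 then 7 / 8 else if s = 3 then 1 / 8 else 0
       let μ2 : Fin 6 → ℝ := fun s => if s = 4 ∨ s = 5 then 1 / 2 else 0
       let μ : ℕ → Fin 6 → ℝ := fun k => if k = 0 then μ0 else if k = 1 then μ1 else μ2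
       let ρ : ℕ → ℝ := fun k => if k = 0 then 1 / 2 else if k = 1 then 1 / 3 else 1 / 6
       (∀ E : Finset (Fin 6), E.Nonempty →
          (0 < mass μ0 E → P E = BU μ0 E) ∧
          (mass μ0 E = 0 → ∃ k ≤ 2, P E = BU (μ k) E ∧
            ∀ j ≤ 2, j ≠ k → mass (μ j) E * ρ j < mass (μ k) E * ρ k)) ∧
       mass (P ({2, 3, 4, 5} : Finset (Fin 6))) ({3} : Finset (Fin 6)) ≠
         mass (P ({3, 4, 5} : Finset (Fin 6))) ({3} : Finset (Fin 6)) *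
           mass (P ({2, 3, 4, 5} : Finset (Fin 6))) ({3, 4, 5} : Finset (Fin 6))) := by
  refine ⟨Pd, fun E hE => (P_isProb E hE).1, fun E hE => (P_isProb E hE).2, main_rep, final_ne⟩
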